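/- Let H ∈ C¹(ℝ³) and let x ∈ C³(B⁺,ℝ³) be an H-surface. Then on the set B' := {w ∈ B⁺ : W(w) > 0} the unit normal N satisfies the differential equation ΔN + 2(2H(x)² − K − ∇H(x)·N) W N = −2W ∇H(x). -/

import Mathlib

noncomputable section

open Real Set MeasureTheory Filter NNReal

/-- Points of `ℝ³`, realized as functions `Fin 3 → ℝ`. -/
abbrev R3 : Type := Fin 3 → ℝ

/-- The Euclidean inner product on `ℝ³`. -/
def dot3 (a b : R3) : ℝ := a 0 * b 0 + a 1 * b 1 + a 2 * b 2

/-- The cross product on `ℝ³`. -/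
def cross3 (a b : R3) : R3 :=
  ![a 1 * b 2 - a 2 * b 1, a 2 * b 0 - a 0 * b 2, a 0 * b 1 - a 1 * b 0]

/-- The Euclidean norm on `ℝ³`. -/
def norm3 (a : R3) : ℝ := Real.sqrt (dot3 a a)

/-- The upper half disc `B⁺`. -/
def Bplus : Set (ℝ × ℝ) := {w | w.1 ^ 2 + w.2 ^ 2 < 1 ∧ 0 < w.2}

/-- Partial derivative in the `u`-direction of a vector-valued map. -/
def du (x : ℝ × ℝ → R3) (w : ℝ × ℝ) : R3 := fderiv ℝ x w ((1 : ℝ), (0 : ℝ))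

/-- Partial derivative in the `v`-direction of a vector-valued map. -/
def dv (x : ℝ × ℝ → R3) (w : ℝ × ℝ) : R3 := fderiv ℝ x w ((0 : ℝ), (1 : ℝ))

/-- Partial derivative in the `u`-direction of a scalar function. -/
def duS (f : ℝ × ℝ → ℝ) (w : ℝ × ℝ) : ℝ := fderiv ℝ f w ((1 : ℝ), (0 : ℝ))

/-- Partial derivative in the `v`-direction of a scalar function. -/
def dvS (f : ℝ × ℝ → ℝ) (w : ℝ × ℝ) : ℝ := fderiv ℝ f w ((0 : ℝ), (1 : ℝ))

/-- The area element `W = |x_u ∧ x_v|`. -/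
def Wf (x : ℝ × ℝ → R3) (w : ℝ × ℝ) : ℝ := norm3 (cross3 (du x w) (dv x w))

/-- The unit normal `N = W⁻¹ x_u ∧ x_v`. -/
def Nf (x : ℝ × ℝ → R3) (w : ℝ × ℝ) : R3 := (Wf x w)⁻¹ • cross3 (du x w) (dv x w)

/-- Coefficient `h₁₁ = x_uu · N` of the second fundamental form. -/
def h11 (x : ℝ × ℝ → R3) (w : ℝ × ℝ) : ℝ := dot3 (du (du x) w) (Nf x w)

/-- Coefficient `h₁₂ = x_uv · N` of the second fundamental form. -/
def h12 (x : ℝ × ℝ → R3) (w : ℝ × ℝ) : ℝ := dot3 (dv (du x) w) (Nf x w)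

/-- Coefficient `h₂₁ = x_vu · N` of the second fundamental form. -/
def h21 (x : ℝ × ℝ → R3) (w : ℝ × ℝ) : ℝ := dot3 (du (dv x) w) (Nf x w)

/-- Coefficient `h₂₂ = x_vv · N` of the second fundamental form. -/
def h22 (x : ℝ × ℝ → R3) (w : ℝ × ℝ) : ℝ := dot3 (dv (dv x) w) (Nf x w)

/-- The Gaussian curvature `K = (h₁₁h₂₂ − h₁₂²)/W²`. -/
def Kg (x : ℝ × ℝ → R3) (w : ℝ × ℝ) : ℝ :=
  (h11 x w * h22 x w - (h12 x w) ^ 2) / (Wf x w) ^ 2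

/-- The spatial gradient of a function on `ℝ³`. -/
def grad3 (H : R3 → ℝ) (p : R3) : R3 := fun i => fderiv ℝ H p (Pi.single i 1)

/-- The divergence of a vector field on `ℝ³`. -/
def divQ (Q : R3 → R3) (p : R3) : ℝ :=
  fderiv ℝ Q p (Pi.single 0 1) 0 + fderiv ℝ Q p (Pi.single 1 1) 1 +
    fderiv ℝ Q p (Pi.single 2 1) 2

/-- `x` is a surface of prescribed mean curvature `H` on `B⁺`:
`Δx = 2H(x) x_u∧x_v` together with the conformality relations. -/
def IsHSurface (H : R3 → ℝ) (x : ℝ × ℝ → R3) : Prop :=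
  ∀ w ∈ Bplus,
    du (du x) w + dv (dv x) w = (2 * H (x w)) • cross3 (du x w) (dv x w) ∧
    dot3 (du x w) (du x w) = dot3 (dv x w) (dv x w) ∧
    dot3 (du x w) (dv x w) = 0

/-!
Where `W > 0`, test both sides against the orthogonal frame `x_u, x_v, N`.
Differentiating `|N|² = 1` twice gives `ΔN·N = -|∇N|²`, and the Weingarten equations
`W N_i = -h_{i1} x_u - h_{i2} x_v` turn `|∇N|²` into `(4H² - 2K) W`.
Differentiating `N·x_j = 0` twice gives `ΔN·x_j = -2 Σ_i N_i·x_{ij} - N·∂_j Δx`. By Weingarten and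
the differentiated conformality relations the sum is `-H ∂_j W`, and since `Δx = 2H(x) W N`,
`N·∂_j Δx = 2 (∇H(x)·x_j) W + 2H ∂_j W`; hence `ΔN·x_j = -2W ∇H(x)·x_j`.
-/

open Matrix Topology

lemma dot3_eq_dotProduct (a b : R3) : dot3 a b = a ⬝ᵥ b := by
  simp [dot3, dotProduct, Fin.sum_univ_three]

lemma cross3_eq_crossProduct (a b : R3) : cross3 a b = a ⨯₃ b := rfl

lemma dot3_comm (a b : R3) : dot3 a b = dot3 b a := by
  simp only [dot3_eq_dotProduct, dotProduct_comm]

lemma dot3_add_left (a b c : R3) : dot3 (a + b) c = dot3 a c + dot3 b c := by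
  simp only [dot3_eq_dotProduct, add_dotProduct]

lemma dot3_add_right (a b c : R3) : dot3 a (b + c) = dot3 a b + dot3 a c := by
  simp only [dot3_eq_dotProduct, dotProduct_add]

lemma dot3_neg_left (a b : R3) : dot3 (-a) b = -dot3 a b := by
  simp only [dot3_eq_dotProduct, neg_dotProduct]

lemma dot3_neg_right (a b : R3) : dot3 a (-b) = -dot3 a b := by
  simp only [dot3_eq_dotProduct, dotProduct_neg]

lemma dot3_smul_left (t : ℝ) (a b : R3) : dot3 (t • a) b = t * dot3 a b := by
  simp only [dot3_eq_dotProduct, smul_dotProduct, smul_eq_mul]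

lemma dot3_smul_right (t : ℝ) (a b : R3) : dot3 a (t • b) = t * dot3 a b := by
  simp only [dot3_eq_dotProduct, dotProduct_smul, smul_eq_mul]

lemma dot3_self_nonneg (a : R3) : 0 ≤ dot3 a a := by
  simpa [dot3_eq_dotProduct] using dotProduct_star_self_nonneg a

lemma dot3_cross3_left (a b : R3) : dot3 a (cross3 a b) = 0 := by
  simp only [dot3_eq_dotProduct, cross3_eq_crossProduct, dot_self_cross]

lemma dot3_cross3_right (a b : R3) : dot3 b (cross3 a b) = 0 := by
  simp only [dot3_eq_dotProduct, cross3_eq_crossProduct, dot_cross_self]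

lemma dot3_cross3_cross3 (a b c d : R3) :
    dot3 (cross3 a b) (cross3 c d) = dot3 a c * dot3 b d - dot3 a d * dot3 b c := by
  simp only [dot3_eq_dotProduct, cross3_eq_crossProduct, cross_dot_cross]

lemma dot3_cross3_self_smul (a b v : R3) :
    dot3 (cross3 a b) (cross3 a b) • v =
      (dot3 v a * dot3 b b - dot3 v b * dot3 a b) • a +
        (dot3 v b * dot3 a a - dot3 v a * dot3 a b) • b + dot3 v (cross3 a b) • cross3 a b := by
  ext i
  fin_cases i <;>
    simp only [dot3, cross3, Fin.isValue, Fin.zero_eta, Fin.mk_one, Fin.reduceFinMk, cons_val_zero,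
      cons_val_one, cons_val, Pi.smul_apply, smul_eq_mul, Pi.add_apply] <;>
    ring

structure IsConformalFrame (a b : R3) (W : ℝ) : Prop where
  dot_self_left : dot3 a a = W
  dot_self_right : dot3 b b = W
  dot_left_right : dot3 a b = 0

namespace IsConformalFrame

variable {a b : R3} {W : ℝ}

lemma dot3_cross3_self (h : IsConformalFrame a b W) :
    dot3 (cross3 a b) (cross3 a b) = W ^ 2 := by
  rw [dot3_cross3_cross3, h.dot_self_left, h.dot_self_right, h.dot_left_right]; ring

lemma smul_eq (h : IsConformalFrame a b W) (hW : W ≠ 0) {n : R3} (hn : W • n = cross3 a b)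
    (v : R3) : W • v = dot3 v a • a + dot3 v b • b + (W * dot3 v n) • n := by
  have key := dot3_cross3_self_smul a b v
  rw [h.dot3_cross3_self, h.dot_self_left, h.dot_self_right, h.dot_left_right, ← hn,
    dot3_smul_right] at key
  apply smul_right_injective R3 hW
  linear_combination (norm := module) key

lemma dot3_smul_add_smul (h : IsConformalFrame a b W) (s t s' t' : ℝ) :
    dot3 (s • a + t • b) (s' • a + t' • b) = W * (s * s' + t * t') := by
  simp only [dot3_add_left, dot3_add_right, dot3_smul_left, dot3_smul_right, h.dot_self_left,
    h.dot_self_right, dot3_comm b a, h.dot_left_right]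
  ring

lemma ext (h : IsConformalFrame a b W) (hW : W ≠ 0) {n : R3} (hn : W • n = cross3 a b)
    {v v' : R3} (ha : dot3 v a = dot3 v' a) (hb : dot3 v b = dot3 v' b)
    (hn' : dot3 v n = dot3 v' n) : v = v' := by
  apply smul_right_injective R3 hW
  simp only [h.smul_eq hW hn, ha, hb, hn']

end IsConformalFrame

section PartialDerivatives

variable {E : Type*} [NormedAddCommGroup E] [NormedSpace ℝ E]

def partialDeriv (d : ℝ × ℝ) (f : ℝ × ℝ → E) (z : ℝ × ℝ) : E := fderiv ℝ f z d

variable {f g : ℝ × ℝ → E} {z : ℝ × ℝ}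

lemma ContDiffAt.partialDeriv {m n : WithTop ℕ∞} (hf : ContDiffAt ℝ n f z) (hmn : m + 1 ≤ n)
    (d : ℝ × ℝ) : ContDiffAt ℝ m (partialDeriv d f) z :=
  (hf.fderiv_right hmn).clm_apply contDiffAt_const

lemma ContDiffAt.differentiableAt_partialDeriv {n : WithTop ℕ∞} (hf : ContDiffAt ℝ n f z)
    (hn : 2 ≤ n) (d : ℝ × ℝ) : DifferentiableAt ℝ (_root_.partialDeriv d f) z :=
  (hf.partialDeriv (m := 1) (one_add_one_eq_two.le.trans hn) d).differentiableAt one_ne_zero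

lemma Filter.EventuallyEq.partialDeriv_eq (h : f =ᶠ[𝓝 z] g) (d : ℝ × ℝ) :
    partialDeriv d f z = partialDeriv d g z := by
  rw [partialDeriv, partialDeriv, h.fderiv_eq]

lemma Filter.EventuallyEq.partialDeriv (h : f =ᶠ[𝓝 z] g) (d : ℝ × ℝ) :
    partialDeriv d f =ᶠ[𝓝 z] partialDeriv d g :=
  h.eventuallyEq_nhds.mono fun _ hy => hy.partialDeriv_eq d

@[simp]
lemma partialDeriv_const (d : ℝ × ℝ) (c : E) : partialDeriv d (fun _ : ℝ × ℝ => c) = 0 := by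
  ext1 z; simp [partialDeriv]

lemma partialDeriv_add (hf : DifferentiableAt ℝ f z) (hg : DifferentiableAt ℝ g z)
    (d : ℝ × ℝ) :
    partialDeriv d (fun y => f y + g y) z = partialDeriv d f z + partialDeriv d g z := by
  rw [partialDeriv, fderiv_fun_add hf hg]; rfl

lemma partialDeriv_smul {φ : ℝ × ℝ → ℝ} (hφ : DifferentiableAt ℝ φ z)
    (hf : DifferentiableAt ℝ f z) (d : ℝ × ℝ) :
    partialDeriv d (fun y => φ y • f y) z =
      partialDeriv d φ z • f z + φ z • partialDeriv d f z := by
  simp [partialDeriv, fderiv_fun_smul hφ hf, add_comm]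

lemma partialDeriv_comm (hf : ContDiffAt ℝ 2 f z) (d e : ℝ × ℝ) :
    partialDeriv d (partialDeriv e f) z = partialDeriv e (partialDeriv d f) z := by
  have hdiff : DifferentiableAt ℝ (fderiv ℝ f) z :=
    (hf.fderiv_right (m := 1) (by norm_num)).differentiableAt (by norm_num)
  have hsecond (d e : ℝ × ℝ) :
      partialDeriv d (partialDeriv e f) z = fderiv ℝ (fderiv ℝ f) z d e := by
    change fderiv ℝ (fun y => fderiv ℝ f y e) z d = _
    rw [fderiv_clm_apply hdiff (differentiableAt_const e)]
    simp
  rw [hsecond, hsecond, (hf.isSymmSndFDerivAt (by simp)).eq]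

lemma partialDeriv_partialDeriv_partialDeriv_comm (hf : ContDiffAt ℝ 3 f z) (d e : ℝ × ℝ) :
    partialDeriv e (partialDeriv e (partialDeriv d f)) z =
      partialDeriv d (partialDeriv e (partialDeriv e f)) z := by
  have hcomm : partialDeriv e (partialDeriv d f) =ᶠ[𝓝 z] partialDeriv d (partialDeriv e f) :=
    (hf.eventually (by simp)).mono fun y hy => partialDeriv_comm (hy.of_le (by norm_num)) e d
  rw [hcomm.partialDeriv_eq, partialDeriv_comm (hf.partialDeriv (by norm_num) e)]

end PartialDerivatives

section DotProductCalculus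

variable {f g : ℝ × ℝ → R3} {z : ℝ × ℝ}

lemma partialDeriv_dot3 (hf : DifferentiableAt ℝ f z) (hg : DifferentiableAt ℝ g z)
    (d : ℝ × ℝ) :
    partialDeriv d (fun y => dot3 (f y) (g y)) z =
      dot3 (partialDeriv d f z) (g z) + dot3 (f z) (partialDeriv d g z) := by
  have hcoord (h : ℝ × ℝ → R3) (hh : DifferentiableAt ℝ h z) (i : Fin 3) :
      HasFDerivAt (fun y => h y i) ((ContinuousLinearMap.proj i).comp (fderiv ℝ h z)) z :=
    hasFDerivAt_pi'.1 hh.hasFDerivAt i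
  have hsum := (((hcoord f hf 0).fun_mul (hcoord g hg 0)).fun_add
    ((hcoord f hf 1).fun_mul (hcoord g hg 1))).fun_add ((hcoord f hf 2).fun_mul (hcoord g hg 2))
  unfold partialDeriv _root_.dot3
  rw [hsum.fderiv]
  simp only [_root_.add_apply, _root_.smul_apply, ContinuousLinearMap.comp_apply,
    ContinuousLinearMap.proj_apply, smul_eq_mul]
  ring

lemma partialDeriv_dot3_of_eventuallyEq {φ : ℝ × ℝ → ℝ}
    (h : (fun y => dot3 (f y) (g y)) =ᶠ[𝓝 z] φ) (hf : DifferentiableAt ℝ f z)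
    (hg : DifferentiableAt ℝ g z) (d : ℝ × ℝ) :
    dot3 (partialDeriv d f z) (g z) + dot3 (f z) (partialDeriv d g z) = partialDeriv d φ z := by
  rw [← partialDeriv_dot3 hf hg, h.partialDeriv_eq]

lemma DifferentiableAt.dot3 (hf : DifferentiableAt ℝ f z) (hg : DifferentiableAt ℝ g z) :
    DifferentiableAt ℝ (fun y => dot3 (f y) (g y)) z := by
  unfold _root_.dot3; fun_prop

lemma ContDiffAt.dot3 {n : WithTop ℕ∞} (hf : ContDiffAt ℝ n f z) (hg : ContDiffAt ℝ n g z) :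
    ContDiffAt ℝ n (fun y => dot3 (f y) (g y)) z := by
  unfold _root_.dot3; fun_prop

lemma ContDiffAt.cross3 {n : WithTop ℕ∞} (hf : ContDiffAt ℝ n f z) (hg : ContDiffAt ℝ n g z) :
    ContDiffAt ℝ n (fun y => cross3 (f y) (g y)) z := by
  refine contDiffAt_pi.2 fun i => ?_
  fin_cases i <;>
    simp only [_root_.cross3, Fin.isValue, Fin.zero_eta, Fin.mk_one, Fin.reduceFinMk, cons_val_zero,
      cons_val_one, cons_val] <;>
    fun_prop

lemma partialDeriv_partialDeriv_dot3 (hf : ContDiffAt ℝ 2 f z) (hg : ContDiffAt ℝ 2 g z)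
    (d : ℝ × ℝ) :
    partialDeriv d (partialDeriv d (fun y => dot3 (f y) (g y))) z =
      dot3 (partialDeriv d (partialDeriv d f) z) (g z) +
        2 * dot3 (partialDeriv d f z) (partialDeriv d g z) +
        dot3 (f z) (partialDeriv d (partialDeriv d g) z) := by
  have hfirst : partialDeriv d (fun y => dot3 (f y) (g y)) =ᶠ[𝓝 z]
      fun y => dot3 (partialDeriv d f y) (g y) + dot3 (f y) (partialDeriv d g y) := by
    filter_upwards [hf.eventually (by simp), hg.eventually (by simp)] with y hfy hgy
    exact partialDeriv_dot3 (hfy.differentiableAt (by simp)) (hgy.differentiableAt (by simp)) d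
  have hf' := hf.differentiableAt (by simp)
  have hg' := hg.differentiableAt (by simp)
  have hdf := hf.differentiableAt_partialDeriv le_rfl d
  have hdg := hg.differentiableAt_partialDeriv le_rfl d
  rw [hfirst.partialDeriv_eq, partialDeriv_add (hdf.dot3 hg') (hf'.dot3 hdg),
    partialDeriv_dot3 hdf hg', partialDeriv_dot3 hf' hdg]
  ring

lemma ContinuousLinearMap.apply_eq_dot3 (L : R3 →L[ℝ] ℝ) (v : R3) :
    L v = dot3 (fun i => L (Pi.single i 1)) v := by
  have hv : v = v 0 • Pi.single 0 1 + v 1 • Pi.single 1 1 + v 2 • Pi.single 2 1 := by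
    ext i; fin_cases i <;> simp
  conv_lhs => rw [hv]
  simp only [map_add, map_smul, smul_eq_mul, dot3]
  ring

lemma partialDeriv_comp_eq_dot3_grad3 {H : R3 → ℝ}
    (hH : DifferentiableAt ℝ H (f z)) (hf : DifferentiableAt ℝ f z) (d : ℝ × ℝ) :
    partialDeriv d (fun y => H (f y)) z = dot3 (grad3 H (f z)) (partialDeriv d f z) := by
  rw [partialDeriv, fderiv_fun_comp z hH hf, ContinuousLinearMap.comp_apply,
    ContinuousLinearMap.apply_eq_dot3]
  rfl

end DotProductCalculus

lemma isOpen_Bplus : IsOpen Bplus :=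
  (isOpen_lt (by fun_prop : Continuous fun w : ℝ × ℝ => w.1 ^ 2 + w.2 ^ 2) continuous_const).inter
    (isOpen_lt continuous_const continuous_snd)

section NormalField

variable {x : ℝ × ℝ → R3} {z : ℝ × ℝ}

lemma Wf_sq :
    Wf x z ^ 2 = dot3 (cross3 (du x z) (dv x z)) (cross3 (du x z) (dv x z)) :=
  Real.sq_sqrt (dot3_self_nonneg _)

lemma Wf_smul_Nf (hW : Wf x z ≠ 0) : Wf x z • Nf x z = cross3 (du x z) (dv x z) :=
  smul_inv_smul₀ hW _

lemma dot3_Nf_self (hW : Wf x z ≠ 0) : dot3 (Nf x z) (Nf x z) = 1 := by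
  rw [Nf, dot3_smul_left, dot3_smul_right, ← Wf_sq]
  field_simp

lemma dot3_Nf_partialDeriv (x : ℝ × ℝ → R3) (z d : ℝ × ℝ) :
    dot3 (Nf x z) (partialDeriv d x z) = 0 := by
  have hd : d = d.1 • ((1 : ℝ), (0 : ℝ)) + d.2 • ((0 : ℝ), (1 : ℝ)) := by ext <;> simp
  rw [partialDeriv, hd, map_add, map_smul, map_smul, Nf, dot3_smul_left, dot3_comm,
    dot3_add_left, dot3_smul_left, dot3_smul_left]
  change _ * (_ * dot3 (du x z) _ + _ * dot3 (dv x z) _) = 0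
  rw [dot3_cross3_left, dot3_cross3_right]
  ring

lemma du_eq_partialDeriv (f : ℝ × ℝ → R3) : du f = partialDeriv (1, 0) f := rfl

lemma dv_eq_partialDeriv (f : ℝ × ℝ → R3) : dv f = partialDeriv (0, 1) f := rfl

lemma h21_eq_h12 (hx : ContDiffAt ℝ 2 x z) : h21 x z = h12 x z :=
  congrArg (dot3 · (Nf x z)) (partialDeriv_comm hx (1, 0) (0, 1))

end NormalField

namespace IsHSurface

variable {H : R3 → ℝ} {x : ℝ × ℝ → R3} {z w : ℝ × ℝ}

lemma isConformalFrame (hxH : IsHSurface H x) (hz : z ∈ Bplus) :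
    IsConformalFrame (du x z) (dv x z) (Wf x z) := by
  obtain ⟨-, hconf, horth⟩ := hxH z hz
  have hW : Wf x z = dot3 (du x z) (du x z) := by
    rw [Wf, norm3, dot3_cross3_cross3, horth, ← hconf, zero_mul, sub_zero,
      Real.sqrt_mul_self (dot3_self_nonneg _)]
  exact ⟨hW.symm, hconf.symm.trans hW.symm, horth⟩

lemma eventually_isConformalFrame (hxH : IsHSurface H x) (hw : w ∈ Bplus) :
    ∀ᶠ z in 𝓝 w, IsConformalFrame (du x z) (dv x z) (Wf x z) :=
  eventually_of_mem (isOpen_Bplus.mem_nhds hw) fun _ => hxH.isConformalFrame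

lemma laplacian_eq (hxH : IsHSurface H x) (hz : z ∈ Bplus) (hW : Wf x z ≠ 0) :
    du (du x) z + dv (dv x) z = (2 * H (x z) * Wf x z) • Nf x z := by
  rw [(hxH z hz).1, mul_smul _ (Wf x z), Wf_smul_Nf hW]

lemma h11_add_h22 (hxH : IsHSurface H x) (hz : z ∈ Bplus) (hW : Wf x z ≠ 0) :
    h11 x z + h22 x z = 2 * H (x z) * Wf x z := by
  rw [h11, h22, ← dot3_add_left, hxH.laplacian_eq hz hW, dot3_smul_left, dot3_Nf_self hW,
    mul_one]

lemma contDiffAt_Wf (hxH : IsHSurface H x) (hx : ContDiffAt ℝ 3 x w) (hw : w ∈ Bplus) :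
    ContDiffAt ℝ 2 (Wf x) w := by
  have hu : ContDiffAt ℝ 2 (du x) w := hx.partialDeriv (by norm_num) _
  exact (hu.dot3 hu).congr_of_eventuallyEq
    ((hxH.eventually_isConformalFrame hw).mono fun _ h => h.dot_self_left.symm)

lemma contDiffAt_Nf (hxH : IsHSurface H x) (hx : ContDiffAt ℝ 3 x w) (hw : w ∈ Bplus)
    (hW : Wf x w ≠ 0) : ContDiffAt ℝ 2 (Nf x) w := by
  have hu : ContDiffAt ℝ 2 (du x) w := hx.partialDeriv (by norm_num) _
  have hv : ContDiffAt ℝ 2 (dv x) w := hx.partialDeriv (by norm_num) _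
  exact ((hxH.contDiffAt_Wf hx hw).inv hW).smul (hu.cross3 hv)

lemma eventually_dot3_Nf_self (hxH : IsHSurface H x) (hx : ContDiffAt ℝ 3 x w)
    (hw : w ∈ Bplus) (hW : Wf x w ≠ 0) :
    (fun z => dot3 (Nf x z) (Nf x z)) =ᶠ[𝓝 w] fun _ => 1 :=
  ((hxH.contDiffAt_Wf hx hw).continuousAt.eventually_ne hW).mono fun _ => dot3_Nf_self

lemma dot3_partialDeriv_Nf_Nf (hxH : IsHSurface H x) (hx : ContDiffAt ℝ 3 x w)
    (hw : w ∈ Bplus) (hW : Wf x w ≠ 0) (d : ℝ × ℝ) :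
    dot3 (partialDeriv d (Nf x) w) (Nf x w) = 0 := by
  have hN := (hxH.contDiffAt_Nf hx hw hW).differentiableAt (by norm_num)
  have h := partialDeriv_dot3_of_eventuallyEq (hxH.eventually_dot3_Nf_self hx hw hW) hN hN d
  rw [partialDeriv_const, dot3_comm (Nf x w)] at h
  simpa using h

lemma dot3_partialDeriv_Nf_partialDeriv (hxH : IsHSurface H x) (hx : ContDiffAt ℝ 3 x w)
    (hw : w ∈ Bplus) (hW : Wf x w ≠ 0) (d e : ℝ × ℝ) :
    dot3 (partialDeriv d (Nf x) w) (partialDeriv e x w) =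
      -dot3 (partialDeriv d (partialDeriv e x) w) (Nf x w) := by
  have hN := (hxH.contDiffAt_Nf hx hw hW).differentiableAt (by norm_num)
  have hxe := hx.differentiableAt_partialDeriv (by norm_num) e
  have h := partialDeriv_dot3_of_eventuallyEq
    (Eventually.of_forall (dot3_Nf_partialDeriv x · e)) hN hxe d
  rw [partialDeriv_const, dot3_comm (Nf x w)] at h
  simpa [eq_neg_iff_add_eq_zero] using h

/-- The Weingarten equations. -/
lemma Wf_smul_partialDeriv_Nf (hxH : IsHSurface H x) (hx : ContDiffAt ℝ 3 x w)
    (hw : w ∈ Bplus) (hW : Wf x w ≠ 0) (d : ℝ × ℝ) :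
    Wf x w • partialDeriv d (Nf x) w =
      -(dot3 (partialDeriv d (du x) w) (Nf x w) • du x w +
        dot3 (partialDeriv d (dv x) w) (Nf x w) • dv x w) := by
  rw [(hxH.isConformalFrame hw).smul_eq hW (Wf_smul_Nf hW), hxH.dot3_partialDeriv_Nf_Nf hx hw hW,
    du_eq_partialDeriv, dv_eq_partialDeriv, hxH.dot3_partialDeriv_Nf_partialDeriv hx hw hW,
    hxH.dot3_partialDeriv_Nf_partialDeriv hx hw hW]
  simp only [mul_zero, zero_smul, add_zero, neg_smul, neg_add]

lemma dot3_partialDeriv_partialDeriv_Nf_Nf (hxH : IsHSurface H x) (hx : ContDiffAt ℝ 3 x w)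
    (hw : w ∈ Bplus) (hW : Wf x w ≠ 0) (d : ℝ × ℝ) :
    dot3 (partialDeriv d (partialDeriv d (Nf x)) w) (Nf x w) =
      -dot3 (partialDeriv d (Nf x) w) (partialDeriv d (Nf x) w) := by
  have hN := hxH.contDiffAt_Nf hx hw hW
  have h := partialDeriv_partialDeriv_dot3 hN hN d
  rw [((hxH.eventually_dot3_Nf_self hx hw hW).partialDeriv d).partialDeriv_eq, partialDeriv_const,
    dot3_comm (Nf x w)] at h
  simp only [Pi.zero_def, partialDeriv_const, Pi.zero_apply] at h
  linarith

lemma Wf_mul_dot3_du_Nf_add_dot3_dv_Nf (hxH : IsHSurface H x) (hx : ContDiffAt ℝ 3 x w)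
    (hw : w ∈ Bplus) (hW : Wf x w ≠ 0) :
    Wf x w * (dot3 (du (Nf x) w) (du (Nf x) w) + dot3 (dv (Nf x) w) (dv (Nf x) w)) =
      h11 x w ^ 2 + 2 * h12 x w ^ 2 + h22 x w ^ 2 := by
  have hu : Wf x w • du (Nf x) w = -(h11 x w • du x w + h21 x w • dv x w) :=
    hxH.Wf_smul_partialDeriv_Nf hx hw hW (1, 0)
  have hv : Wf x w • dv (Nf x) w = -(h12 x w • du x w + h22 x w • dv x w) :=
    hxH.Wf_smul_partialDeriv_Nf hx hw hW (0, 1)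
  have hframe := hxH.isConformalFrame hw
  apply mul_left_cancel₀ hW
  calc Wf x w * (Wf x w * (dot3 (du (Nf x) w) (du (Nf x) w) + dot3 (dv (Nf x) w) (dv (Nf x) w)))
      = dot3 (Wf x w • du (Nf x) w) (Wf x w • du (Nf x) w) +
          dot3 (Wf x w • dv (Nf x) w) (Wf x w • dv (Nf x) w) := by
        simp only [dot3_smul_left, dot3_smul_right]; ring
    _ = Wf x w * (h11 x w ^ 2 + h21 x w ^ 2) + Wf x w * (h12 x w ^ 2 + h22 x w ^ 2) := by
        rw [hu, hv, dot3_neg_left, dot3_neg_right, neg_neg, dot3_neg_left, dot3_neg_right, neg_neg,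
          hframe.dot3_smul_add_smul, hframe.dot3_smul_add_smul]
        ring
    _ = Wf x w * (h11 x w ^ 2 + 2 * h12 x w ^ 2 + h22 x w ^ 2) := by
        rw [h21_eq_h12 (hx.of_le (by norm_num))]; ring

lemma two_mul_dot3_du_partialDeriv_du (hxH : IsHSurface H x) (hx : ContDiffAt ℝ 3 x w)
    (hw : w ∈ Bplus) (d : ℝ × ℝ) :
    2 * dot3 (du x w) (partialDeriv d (du x) w) = partialDeriv d (Wf x) w := by
  have hu : DifferentiableAt ℝ (du x) w := hx.differentiableAt_partialDeriv (by norm_num) _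
  rw [← partialDeriv_dot3_of_eventuallyEq ((hxH.eventually_isConformalFrame hw).mono
    fun _ h => h.dot_self_left) hu hu, dot3_comm (partialDeriv d _ w)]
  ring

lemma two_mul_dot3_dv_partialDeriv_dv (hxH : IsHSurface H x) (hx : ContDiffAt ℝ 3 x w)
    (hw : w ∈ Bplus) (d : ℝ × ℝ) :
    2 * dot3 (dv x w) (partialDeriv d (dv x) w) = partialDeriv d (Wf x) w := by
  have hv : DifferentiableAt ℝ (dv x) w := hx.differentiableAt_partialDeriv (by norm_num) _
  rw [← partialDeriv_dot3_of_eventuallyEq ((hxH.eventually_isConformalFrame hw).mono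
    fun _ h => h.dot_self_right) hv hv, dot3_comm (partialDeriv d _ w)]
  ring

lemma dot3_partialDeriv_du_dv_add (hxH : IsHSurface H x) (hx : ContDiffAt ℝ 3 x w)
    (hw : w ∈ Bplus) (d : ℝ × ℝ) :
    dot3 (partialDeriv d (du x) w) (dv x w) + dot3 (du x w) (partialDeriv d (dv x) w) = 0 := by
  have hu : DifferentiableAt ℝ (du x) w := hx.differentiableAt_partialDeriv (by norm_num) _
  have hv : DifferentiableAt ℝ (dv x) w := hx.differentiableAt_partialDeriv (by norm_num) _
  rw [partialDeriv_dot3_of_eventuallyEq ((hxH.eventually_isConformalFrame hw).mono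
    fun _ h => h.dot_left_right) hu hv, partialDeriv_const, Pi.zero_apply]

lemma dot3_du_Nf_add_dot3_dv_Nf_partialDeriv (hxH : IsHSurface H x) (hx : ContDiffAt ℝ 3 x w)
    (hw : w ∈ Bplus) (hW : Wf x w ≠ 0) (d : ℝ × ℝ) :
    dot3 (du (Nf x) w) (partialDeriv d (du x) w) + dot3 (dv (Nf x) w) (partialDeriv d (dv x) w) =
      -(H (x w) * partialDeriv d (Wf x) w) := by
  have hu : Wf x w • du (Nf x) w = -(h11 x w • du x w + h21 x w • dv x w) :=
    hxH.Wf_smul_partialDeriv_Nf hx hw hW (1, 0)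
  have hv : Wf x w • dv (Nf x) w = -(h12 x w • du x w + h22 x w • dv x w) :=
    hxH.Wf_smul_partialDeriv_Nf hx hw hW (0, 1)
  apply mul_left_cancel₀ hW
  calc Wf x w * (dot3 (du (Nf x) w) (partialDeriv d (du x) w) +
        dot3 (dv (Nf x) w) (partialDeriv d (dv x) w))
      = dot3 (Wf x w • du (Nf x) w) (partialDeriv d (du x) w) +
          dot3 (Wf x w • dv (Nf x) w) (partialDeriv d (dv x) w) := by
        simp only [dot3_smul_left]; ring
    _ = -(h11 x w * dot3 (du x w) (partialDeriv d (du x) w) +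
          h21 x w * dot3 (partialDeriv d (du x) w) (dv x w) +
          h12 x w * dot3 (du x w) (partialDeriv d (dv x) w) +
          h22 x w * dot3 (dv x w) (partialDeriv d (dv x) w)) := by
        rw [hu, hv]
        simp only [dot3_neg_left, dot3_add_left, dot3_smul_left, dot3_comm (dv x w)]
        ring
    _ = Wf x w * -(H (x w) * partialDeriv d (Wf x) w) := by
        rw [h21_eq_h12 (hx.of_le (by norm_num))]
        linear_combination -(h11 x w / 2) * hxH.two_mul_dot3_du_partialDeriv_du hx hw d -
          (h22 x w / 2) * hxH.two_mul_dot3_dv_partialDeriv_dv hx hw d -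
          h12 x w * hxH.dot3_partialDeriv_du_dv_add hx hw d -
          (partialDeriv d (Wf x) w / 2) * hxH.h11_add_h22 hw hW

lemma dot3_Nf_partialDeriv_laplacian (hH : DifferentiableAt ℝ H (x w)) (hxH : IsHSurface H x)
    (hx : ContDiffAt ℝ 3 x w) (hw : w ∈ Bplus) (hW : Wf x w ≠ 0) (d : ℝ × ℝ) :
    dot3 (Nf x w) (partialDeriv d (fun z => du (du x) z + dv (dv x) z) w) =
      2 * dot3 (grad3 H (x w)) (partialDeriv d x w) * Wf x w +
        2 * H (x w) * partialDeriv d (Wf x) w := by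
  have hWd : DifferentiableAt ℝ (Wf x) w :=
    (hxH.contDiffAt_Wf hx hw).differentiableAt (by norm_num)
  have hN : DifferentiableAt ℝ (Nf x) w :=
    (hxH.contDiffAt_Nf hx hw hW).differentiableAt (by norm_num)
  have hHx : DifferentiableAt ℝ (fun z => H (x z)) w :=
    hH.comp w (hx.differentiableAt (by norm_num))
  have hlaplacian : (fun z => du (du x) z + dv (dv x) z) =ᶠ[𝓝 w]
      fun z => (2 * H (x z) * Wf x z) • Nf x z := by
    filter_upwards [isOpen_Bplus.mem_nhds hw,
      (hxH.contDiffAt_Wf hx hw).continuousAt.eventually_ne hW] with z hz hWz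
    exact hxH.laplacian_eq hz hWz
  have hcoeff : partialDeriv d (fun z => 2 * H (x z) * Wf x z) w =
      2 * dot3 (grad3 H (x w)) (partialDeriv d x w) * Wf x w +
        2 * H (x w) * partialDeriv d (Wf x) w := by
    rw [partialDeriv, fderiv_fun_mul (hHx.const_mul 2) hWd, fderiv_const_mul hHx]
    simp only [_root_.add_apply, _root_.smul_apply, smul_eq_mul]
    rw [← partialDeriv, ← partialDeriv, partialDeriv_comp_eq_dot3_grad3 hH
      (hx.differentiableAt (by norm_num))]
    ring
  rw [hlaplacian.partialDeriv_eq,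
    partialDeriv_smul (φ := fun z => 2 * H (x z) * Wf x z) ((hHx.const_mul 2).mul hWd) hN,
    dot3_add_right, dot3_smul_right, dot3_smul_right, dot3_Nf_self hW, dot3_comm (Nf x w),
    hxH.dot3_partialDeriv_Nf_Nf hx hw hW, hcoeff]
  ring

lemma dot3_partialDeriv_partialDeriv_Nf_partialDeriv (hxH : IsHSurface H x)
    (hx : ContDiffAt ℝ 3 x w) (hw : w ∈ Bplus) (hW : Wf x w ≠ 0) (d e : ℝ × ℝ) :
    dot3 (partialDeriv e (partialDeriv e (Nf x)) w) (partialDeriv d x w) =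
      -(2 * dot3 (partialDeriv e (Nf x) w) (partialDeriv d (partialDeriv e x) w) +
        dot3 (Nf x w) (partialDeriv d (partialDeriv e (partialDeriv e x)) w)) := by
  have h := partialDeriv_partialDeriv_dot3 (hxH.contDiffAt_Nf hx hw hW)
    (hx.partialDeriv (m := 2) (by norm_num) d) e
  rw [funext (dot3_Nf_partialDeriv x · d), partialDeriv_const, Pi.zero_def, partialDeriv_const,
    Pi.zero_apply, partialDeriv_comm (hx.of_le (by norm_num)) e d,
    partialDeriv_partialDeriv_partialDeriv_comm hx d e] at h
  linear_combination -h

lemma dot3_laplacian_Nf_partialDeriv (hH : DifferentiableAt ℝ H (x w)) (hxH : IsHSurface H x)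
    (hx : ContDiffAt ℝ 3 x w) (hw : w ∈ Bplus) (hW : Wf x w ≠ 0) (d : ℝ × ℝ) :
    dot3 (du (du (Nf x)) w + dv (dv (Nf x)) w) (partialDeriv d x w) =
      -(2 * Wf x w * dot3 (grad3 H (x w)) (partialDeriv d x w)) := by
  have hu : dot3 (du (du (Nf x)) w) (partialDeriv d x w) =
      -(2 * dot3 (du (Nf x) w) (partialDeriv d (du x) w) +
        dot3 (Nf x w) (partialDeriv d (du (du x)) w)) :=
    hxH.dot3_partialDeriv_partialDeriv_Nf_partialDeriv hx hw hW d (1, 0)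
  have hv : dot3 (dv (dv (Nf x)) w) (partialDeriv d x w) =
      -(2 * dot3 (dv (Nf x) w) (partialDeriv d (dv x) w) +
        dot3 (Nf x w) (partialDeriv d (dv (dv x)) w)) :=
    hxH.dot3_partialDeriv_partialDeriv_Nf_partialDeriv hx hw hW d (0, 1)
  have huu : DifferentiableAt ℝ (du (du x)) w :=
    (hx.partialDeriv (m := 2) (by norm_num) _).differentiableAt_partialDeriv le_rfl _
  have hvv : DifferentiableAt ℝ (dv (dv x)) w :=
    (hx.partialDeriv (m := 2) (by norm_num) _).differentiableAt_partialDeriv le_rfl _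
  have hlaplacian := hxH.dot3_Nf_partialDeriv_laplacian hH hx hw hW d
  rw [partialDeriv_add huu hvv, dot3_add_right] at hlaplacian
  rw [dot3_add_left, hu, hv]
  linear_combination -hlaplacian - 2 * hxH.dot3_du_Nf_add_dot3_dv_Nf_partialDeriv hx hw hW d

lemma dot3_laplacian_Nf_Nf (hxH : IsHSurface H x) (hx : ContDiffAt ℝ 3 x w) (hw : w ∈ Bplus)
    (hW : Wf x w ≠ 0) :
    dot3 (du (du (Nf x)) w + dv (dv (Nf x)) w) (Nf x w) =
      -(2 * (2 * H (x w) ^ 2 - Kg x w) * Wf x w) := by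
  have hu : dot3 (du (du (Nf x)) w) (Nf x w) = -dot3 (du (Nf x) w) (du (Nf x) w) :=
    hxH.dot3_partialDeriv_partialDeriv_Nf_Nf hx hw hW (1, 0)
  have hv : dot3 (dv (dv (Nf x)) w) (Nf x w) = -dot3 (dv (Nf x) w) (dv (Nf x) w) :=
    hxH.dot3_partialDeriv_partialDeriv_Nf_Nf hx hw hW (0, 1)
  have hK : Kg x w * Wf x w ^ 2 = h11 x w * h22 x w - h12 x w ^ 2 := by
    rw [Kg]; field_simp
  apply mul_left_cancel₀ hW
  rw [dot3_add_left, hu, hv]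
  linear_combination -hxH.Wf_mul_dot3_du_Nf_add_dot3_dv_Nf hx hw hW - 2 * hK -
    (h11 x w + h22 x w + 2 * H (x w) * Wf x w) * hxH.h11_add_h22 hw hW

end IsHSurface

/-- For `H ∈ C¹(ℝ³)` and a `C³` `H`-surface `x` on `B⁺`, on the set
`B' = {W > 0}` the unit normal satisfies
`ΔN + 2(2H(x)² − K − ∇H(x)·N) W N = −2W ∇H(x)`. -/
theorem normal_equation (H : R3 → ℝ) (hH : ContDiff ℝ 1 H) (x : ℝ × ℝ → R3)
    (hx : ContDiffOn ℝ 3 x Bplus) (hxH : IsHSurface H x) :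
    ∀ w ∈ Bplus, 0 < Wf x w →
      du (du (Nf x)) w + dv (dv (Nf x)) w +
          (2 * (2 * (H (x w)) ^ 2 - Kg x w - dot3 (grad3 H (x w)) (Nf x w)) * Wf x w) •
            Nf x w
        = (-(2 * Wf x w)) • grad3 H (x w) := by
  intro w hw hWpos
  have hW : Wf x w ≠ 0 := hWpos.ne'
  have hxw : ContDiffAt ℝ 3 x w := hx.contDiffAt (isOpen_Bplus.mem_nhds hw)
  have hHw : DifferentiableAt ℝ H (x w) := (hH.differentiable one_ne_zero) (x w)
  refine (hxH.isConformalFrame hw).ext hW (Wf_smul_Nf hW) ?_ ?_ ?_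
  · change dot3 _ (partialDeriv (1, 0) x w) = dot3 _ (partialDeriv (1, 0) x w)
    rw [dot3_add_left, dot3_smul_left, dot3_smul_left, dot3_Nf_partialDeriv,
      hxH.dot3_laplacian_Nf_partialDeriv hHw hxw hw hW]
    ring
  · change dot3 _ (partialDeriv (0, 1) x w) = dot3 _ (partialDeriv (0, 1) x w)
    rw [dot3_add_left, dot3_smul_left, dot3_smul_left, dot3_Nf_partialDeriv,
      hxH.dot3_laplacian_Nf_partialDeriv hHw hxw hw hW]
    ring
  · rw [dot3_add_left, dot3_smul_left, dot3_smul_left, dot3_Nf_self hW,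
      hxH.dot3_laplacian_Nf_Nf hxw hw hW]
    ring
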